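/- For any two density operators ρ_1, ρ_2 on a finite-dimensional Hilbert space, half the trace distance is bounded by the hyperbolic tangent of a quarter of the Hilbert projective distance: (1/2)‖ρ_1 − ρ_2‖_1 ≤ tanh(h(ρ_1, ρ_2)/4). -/

import Mathlib

open Matrix BigOperators Kronecker ComplexOrder

noncomputable def trNorm {n : Type*} [Fintype n] [DecidableEq n] (M : Matrix n n ℂ) : ℝ :=
  (((Matrix.posSemidef_conjTranspose_mul_self M).1.eigenvectorUnitary.1 *
      Matrix.diagonal (((↑) : ℝ → ℂ) ∘ Real.sqrt ∘ (Matrix.posSemidef_conjTranspose_mul_self M).1.eigenvalues) *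
      (star (Matrix.posSemidef_conjTranspose_mul_self M).1.eigenvectorUnitary : Matrix n n ℂ)).trace).re

noncomputable def mlog {n : Type*} [Fintype n] [DecidableEq n] (M : Matrix n n ℂ) : Matrix n n ℂ :=
  if h : M.IsHermitian then
    (h.eigenvectorUnitary : Matrix n n ℂ) *
      Matrix.diagonal (fun i => (Real.log (h.eigenvalues i) : ℂ)) *
      (star (h.eigenvectorUnitary : Matrix n n ℂ))
  else 0

noncomputable def vnEnt {n : Type*} [Fintype n] [DecidableEq n] (ρ : Matrix n n ℂ) : ℝ :=
  -(((ρ * mlog ρ).trace).re)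

noncomputable def relEnt {n : Type*} [Fintype n] [DecidableEq n] (ρ σ : Matrix n n ℂ) : ℝ :=
  (((ρ * (mlog ρ - mlog σ)).trace).re)

def IsState {n : Type*} [Fintype n] (ρ : Matrix n n ℂ) : Prop := ρ.PosSemidef ∧ ρ.trace = 1

noncomputable def ptraceL {α n : Type*} [Fintype α] (M : Matrix (α × n) (α × n) ℂ) : Matrix n n ℂ :=
  Matrix.of fun i j => ∑ a, M (a, i) (a, j)

noncomputable def ptraceR {α n : Type*} [Fintype n] (M : Matrix (α × n) (α × n) ℂ) : Matrix α α ℂ :=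
  Matrix.of fun i j => ∑ c, M (i, c) (j, c)

noncomputable def amp {α γ δ : Type*} (Φ : Matrix γ γ ℂ → Matrix δ δ ℂ)
    (ρ : Matrix (α × γ) (α × γ) ℂ) : Matrix (α × δ) (α × δ) ℂ :=
  Matrix.of fun x y => Φ (Matrix.of fun c c' => ρ (x.1, c) (y.1, c')) x.2 y.2

def IsCP {γ δ : Type*} [Fintype γ] [Fintype δ] (Φ : Matrix γ γ ℂ → Matrix δ δ ℂ) : Prop :=
  IsLinearMap ℂ Φ ∧ ∀ (k : ℕ) (ρ : Matrix (Fin k × γ) (Fin k × γ) ℂ), ρ.PosSemidef → (amp Φ ρ).PosSemidef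

def IsTP {γ δ : Type*} [Fintype γ] [Fintype δ] (Φ : Matrix γ γ ℂ → Matrix δ δ ℂ) : Prop :=
  ∀ ρ, (Φ ρ).trace = ρ.trace

section tri
variable {α β γ : Type*} [Fintype α] [Fintype β] [Fintype γ]

noncomputable def mAB (ρ : Matrix ((α × β) × γ) ((α × β) × γ) ℂ) : Matrix (α × β) (α × β) ℂ := ptraceR ρ
noncomputable def mA (ρ : Matrix ((α × β) × γ) ((α × β) × γ) ℂ) : Matrix α α ℂ := ptraceR (mAB ρ)
noncomputable def mB (ρ : Matrix ((α × β) × γ) ((α × β) × γ) ℂ) : Matrix β β ℂ := ptraceL (mAB ρ)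
noncomputable def mBC (ρ : Matrix ((α × β) × γ) ((α × β) × γ) ℂ) : Matrix (β × γ) (β × γ) ℂ :=
  Matrix.of fun p q => ∑ a, ρ ((a, p.1), p.2) ((a, q.1), q.2)

noncomputable def cmi [DecidableEq α] [DecidableEq β] [DecidableEq γ]
    (ρ : Matrix ((α × β) × γ) ((α × β) × γ) ℂ) : ℝ :=
  vnEnt (mAB ρ) + vnEnt (mBC ρ) - vnEnt (mB ρ) - vnEnt ρ

noncomputable def prodA_BC (ρ : Matrix ((α × β) × γ) ((α × β) × γ) ℂ) :
    Matrix ((α × β) × γ) ((α × β) × γ) ℂ :=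
  Matrix.of fun x y => mA ρ x.1.1 y.1.1 * mBC ρ (x.1.2, x.2) (y.1.2, y.2)

noncomputable def prodA_B (ρ : Matrix ((α × β) × γ) ((α × β) × γ) ℂ) : Matrix (α × β) (α × β) ℂ :=
  Matrix.of fun x y => mA ρ x.1 y.1 * mB ρ x.2 y.2

noncomputable def tcmi [DecidableEq α] [DecidableEq β] [DecidableEq γ]
    (ρ : Matrix ((α × β) × γ) ((α × β) × γ) ℂ) : ℝ :=
  trNorm (ρ - prodA_BC ρ) - trNorm (mAB ρ - prodA_B ρ)
end tri

/-!
In an orthonormal eigenbasis of `ρ₁ - ρ₂` the trace norm becomes the `ℓ¹` distance between the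
diagonals `a, b` of `ρ₁, ρ₂`, which are probability vectors with `a ≤ λ b` and `b ≤ μ a`.
Summing a pointwise bound gives `‖a - b‖₁ (λμ - 1) ≤ 2 (λ - 1)(μ - 1)`, and AM–GM bounds the
right side by `2 (√(λμ) - 1)²`, so that `½ ‖a - b‖₁ ≤ (√(λμ) - 1) / (√(λμ) + 1) = tanh (log (λμ) / 4)`.
-/

lemma Real.tanh_log_div_two {x : ℝ} (hx : 0 < x) :
    Real.tanh (Real.log x / 2) = (x - 1) / (x + 1) := by
  have hsq : Real.exp (Real.log x / 2) ^ 2 = x := by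
    rw [← Real.exp_nat_mul, Nat.cast_two, mul_div_cancel₀ _ two_ne_zero, Real.exp_log hx]
  have hpos := Real.exp_pos (Real.log x / 2)
  rw [Real.tanh_eq_sinh_div_cosh, Real.sinh_eq, Real.cosh_eq, Real.exp_neg]
  generalize Real.exp (Real.log x / 2) = e at hsq hpos ⊢
  subst hsq
  field_simp

section Classical

open Finset

/-- This is `(μ - 1)(a - b)⁺ + (λ - 1)(b - a)⁺ ≤ (λ - 1)(μ - 1) min a b`, written with
`2 (a - b)⁺ = |a - b| + (a - b)` and `2 min a b = a + b - |a - b|` so that it sums well. -/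
lemma abs_sub_le_of_le_mul {a b lam mu : ℝ} (hlam : 1 ≤ lam) (hmu : 1 ≤ mu)
    (hab : a ≤ lam * b) (hba : b ≤ mu * a) :
    (lam + mu - 2) * |a - b| + (mu - lam) * (a - b) ≤ (lam - 1) * (mu - 1) * (a + b - |a - b|) := by
  rcases le_total b a with h | h
  · rw [abs_of_nonneg (sub_nonneg.2 h)]; nlinarith
  · rw [abs_of_nonpos (sub_nonpos.2 h)]; nlinarith

variable {ι : Type*} [Fintype ι] {a b : ι → ℝ} {lam mu : ℝ}

lemma one_le_of_le_mul_of_sum_eq_one (hsa : ∑ i, a i = 1) (hsb : ∑ i, b i = 1)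
    (hab : ∀ i, a i ≤ lam * b i) : 1 ≤ lam := by
  simpa [hsa, hsb, ← mul_sum] using sum_le_sum fun i (_ : i ∈ univ) => hab i

lemma sum_abs_sub_mul_le (hsa : ∑ i, a i = 1) (hsb : ∑ i, b i = 1)
    (hab : ∀ i, a i ≤ lam * b i) (hba : ∀ i, b i ≤ mu * a i) :
    (∑ i, |a i - b i|) * (lam * mu - 1) ≤ 2 * (lam - 1) * (mu - 1) := by
  have hlam := one_le_of_le_mul_of_sum_eq_one hsa hsb hab
  have hmu := one_le_of_le_mul_of_sum_eq_one hsb hsa hba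
  have hsum := sum_le_sum fun i (_ : i ∈ univ) =>
    abs_sub_le_of_le_mul hlam hmu (hab i) (hba i)
  simp only [sum_add_distrib, ← mul_sum, sum_sub_distrib, hsa, hsb] at hsum
  linarith

theorem half_sum_abs_sub_le_tanh (hsa : ∑ i, a i = 1) (hsb : ∑ i, b i = 1)
    (hab : ∀ i, a i ≤ lam * b i) (hba : ∀ i, b i ≤ mu * a i) :
    1 / 2 * ∑ i, |a i - b i| ≤ Real.tanh (Real.log (lam * mu) / 4) := by
  have hlam := one_le_of_le_mul_of_sum_eq_one hsa hsb hab
  have hmu := one_le_of_le_mul_of_sum_eq_one hsb hsa hba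
  set x := √(lam * mu)
  have hx_sq : x ^ 2 = lam * mu := Real.sq_sqrt (by positivity)
  have hx_one : 1 ≤ x := Real.one_le_sqrt.2 (one_le_mul_of_one_le_of_one_le hlam hmu)
  have h_amgm : 2 * x ≤ lam + mu := by nlinarith [sq_nonneg (lam - mu)]
  rw [show Real.log (lam * mu) / 4 = Real.log x / 2 by rw [Real.log_sqrt (by positivity)]; ring,
    Real.tanh_log_div_two (by positivity)]
  have hS := sum_abs_sub_mul_le hsa hsb hab hba
  have hS_nonneg : 0 ≤ ∑ i, |a i - b i| := sum_nonneg fun i _ => abs_nonneg _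
  rcases hx_one.eq_or_lt with hx_eq | hx_gt
  · have hlam_eq : lam = 1 := by nlinarith
    have hmu_eq : mu = 1 := by nlinarith
    have hab_eq : ∀ i, a i = b i := fun i =>
      le_antisymm (by simpa [hlam_eq] using hab i) (by simpa [hmu_eq] using hba i)
    simp [hab_eq, ← hx_eq]
  · rw [div_eq_mul_inv, le_div_iff₀ (by linarith)]
    nlinarith

end Classical

section BasisDiag

variable {n ι : Type*} [Fintype n] [Fintype ι]

noncomputable def basisDiag (b : OrthonormalBasis ι ℂ (EuclideanSpace ℂ n)) (ρ : Matrix n n ℂ)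
    (i : ι) : ℝ :=
  (star ⇑(b i) ⬝ᵥ ρ *ᵥ ⇑(b i)).re

variable (b : OrthonormalBasis ι ℂ (EuclideanSpace ℂ n)) {ρ σ : Matrix n n ℂ}

lemma basisDiag_nonneg (hρ : ρ.PosSemidef) (i : ι) : 0 ≤ basisDiag b ρ i :=
  (Complex.nonneg_iff.1 (hρ.dotProduct_mulVec_nonneg _)).1

lemma basisDiag_sub (ρ σ : Matrix n n ℂ) (i : ι) :
    basisDiag b (ρ - σ) i = basisDiag b ρ i - basisDiag b σ i := by
  simp [basisDiag, sub_mulVec, dotProduct_sub]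

lemma basisDiag_real_smul (c : ℝ) (ρ : Matrix n n ℂ) (i : ι) :
    basisDiag b ((c : ℂ) • ρ) i = c * basisDiag b ρ i := by
  simp [basisDiag, smul_mulVec, dotProduct_smul]

lemma basisDiag_le_of_posSemidef_sub {c : ℝ} (h : ((c : ℂ) • σ - ρ).PosSemidef) (i : ι) :
    basisDiag b ρ i ≤ c * basisDiag b σ i := by
  have := basisDiag_nonneg b h i
  rwa [basisDiag_sub, basisDiag_real_smul, sub_nonneg] at this

lemma sum_basisDiag [DecidableEq n] (ρ : Matrix n n ℂ) : ∑ i, basisDiag b ρ i = ρ.trace.re := by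
  rw [← trace_toLin_eq ρ (PiLp.basisFun 2 ℂ n), LinearMap.trace_eq_sum_inner _ b, Complex.re_sum]
  simp [basisDiag, EuclideanSpace.inner_eq_star_dotProduct, ← toLpLin_eq_toLin, dotProduct_comm]

lemma basisDiag_eigenvectorBasis [DecidableEq n] (hρ : ρ.IsHermitian) (i : n) :
    basisDiag hρ.eigenvectorBasis ρ i = hρ.eigenvalues i :=
  (hρ.eigenvalues_eq i).symm

end BasisDiag

section TraceNorm

variable {n : Type*} [Fintype n] [DecidableEq n]

lemma Matrix.IsHermitian.trace_cfc {𝕜 : Type*} [RCLike 𝕜] {A : Matrix n n 𝕜}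
    (hA : A.IsHermitian) (f : ℝ → ℝ) : (cfc f A).trace = ∑ i, (f (hA.eigenvalues i) : 𝕜) := by
  rw [hA.cfc_eq, IsHermitian.cfc, Unitary.conjStarAlgAut_apply, trace_mul_cycle,
    Unitary.coe_star_mul_self, one_mul, trace_diagonal]
  rfl

lemma trNorm_eq_re_trace_cfc_sqrt (M : Matrix n n ℂ) :
    trNorm M = (cfc Real.sqrt (Mᴴ * M)).trace.re := by
  rw [(posSemidef_conjTranspose_mul_self M).1.cfc_eq, IsHermitian.cfc,
    Unitary.conjStarAlgAut_apply]
  rfl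

lemma trNorm_of_isHermitian {M : Matrix n n ℂ} (hM : M.IsHermitian) :
    trNorm M = ∑ i, |hM.eigenvalues i| := by
  have hsq : Mᴴ * M = cfc (fun x : ℝ => x ^ 2) M := by
    rw [hM.eq, cfc_pow_id M 2 hM.isSelfAdjoint, sq]
  rw [trNorm_eq_re_trace_cfc_sqrt, hsq, ← cfc_comp' Real.sqrt (fun x : ℝ => x ^ 2) M,
    hM.trace_cfc]
  simp [Real.sqrt_sq_eq_abs]

end TraceNorm

/-- `(1/2)‖ρ₁ − ρ₂‖₁ ≤ tanh(h(ρ₁,ρ₂)/4)` where `h` is the Hilbert projective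
metric.  Formulated via arbitrary witnesses `lam, mu` with `ρ₁ ≤ lam·ρ₂` and `ρ₂ ≤ mu·ρ₁`
(so that `h(ρ₁,ρ₂) = inf log(lam·mu)`); the case where no such witnesses exist is the
trivial `h = ∞` case. -/
theorem stmt14 {n : Type*} [Fintype n] [DecidableEq n]
    (ρ₁ ρ₂ : Matrix n n ℂ) (h₁ : IsState ρ₁) (h₂ : IsState ρ₂)
    (lam mu : ℝ)
    (hl : (((lam : ℝ) : ℂ) • ρ₂ - ρ₁).PosSemidef)
    (hm : (((mu : ℝ) : ℂ) • ρ₁ - ρ₂).PosSemidef) :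
    (1 / 2) * trNorm (ρ₁ - ρ₂) ≤ Real.tanh (Real.log (lam * mu) / 4) := by
  have hΔ : (ρ₁ - ρ₂).IsHermitian := h₁.1.1.sub h₂.1.1
  set b := hΔ.eigenvectorBasis
  have htrNorm : trNorm (ρ₁ - ρ₂) = ∑ i, |basisDiag b ρ₁ i - basisDiag b ρ₂ i| := by
    simp only [trNorm_of_isHermitian hΔ, ← basisDiag_eigenvectorBasis hΔ, basisDiag_sub, b]
  have hsum {ρ : Matrix n n ℂ} (hρ : IsState ρ) : ∑ i, basisDiag b ρ i = 1 := by
    rw [sum_basisDiag, hρ.2, Complex.one_re]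
  rw [htrNorm]
  exact half_sum_abs_sub_le_tanh (hsum h₁) (hsum h₂)
    (basisDiag_le_of_posSemidef_sub b hl) (basisDiag_le_of_posSemidef_sub b hm)
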